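/- arXiv:2002.12808 — 2 statements merged into one kernel-verified Lean document; each statement's English description precedes it below -/
import Mathlib

section
/- Let $a < b$ be real numbers, $0 < n < 1$, and let $F : [a,b] \to \mathbb{R}$ be continuous with $F(a) = 0$. Then the following are equivalent: (1) there exists a continuous function $\Phi : [a,b] \to \mathbb{R}$ with $\Phi(a) = 0$ such that $J_a^n \Phi(x) = F(x)$ for every $x \in [a,b]$; (2) there exists a continuous function $g : [a,b] \to \mathbb{R}$ with $g(a) = 0$ such that $J_a^{1-n} F(x) = \int_a^x g(t)\,dt$ for every $x \in [a,b]$. (This is the transport to primitives of the paper's theorem that the Abel integral equation $\frac{1}{\Gamma(n)} \int_a^x (x-t)^{n-1} \varphi(t)\,dt = f(x)$ is solvable in $D_{HK}$ if and only if $\mathcal{J}_a^{1-n} f \in C[a,b]$ and $\mathcal{J}_a^{1-n} f(a) = 0$: here $F$ is the primitive of the data $f$, $\Phi$ is the primitive of the solution $\varphi$, and $g$ is the continuous function representing $\mathcal{J}_a^{1-n} f$.) -/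
/-!
Everything rests on the semigroup law `J^α (J^β h) = J^(α+β) h` for continuous `h`. Writing the
left side as an iterated integral over the triangle `a < s < t < x` and integrating first in `t`,
it follows from the Beta integral
`∫_s^x (x-t)^(α-1) (t-s)^(β-1) dt = Γ(α)Γ(β)/Γ(α+β) · (x-s)^(α+β-1)`.
If `J^n Φ = F`, then `J^(1-n) F = J^1 Φ`, so `g = Φ` works. Conversely, if `J^(1-n) F = J^1 g`,
then `J^1 F = J^n (J^(1-n) F) = J^(n+1) g = J^1 (J^n g)`; since `J^1 h` has derivative `h`, the
continuous functions `F` and `J^n g` agree, so `Φ = g` works.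
-/

open MeasureTheory Set

/-- The Riemann–Liouville fractional integral of order `n` based at `a`. -/
noncomputable def rlInt (a n : ℝ) (h : ℝ → ℝ) (x : ℝ) : ℝ :=
  (1 / Real.Gamma n) * ∫ t in a..x, (x - t) ^ (n - 1) * h t

theorem integral_sub_rpow {β : ℝ} (hβ : 0 < β) (a t : ℝ) :
    ∫ s in a..t, (t - s) ^ (β - 1) = (t - a) ^ β / β := by
  rw [intervalIntegral.integral_comp_sub_left (fun y => y ^ (β - 1)) t, sub_self,
    integral_rpow (Or.inl (by linarith)), sub_add_cancel, Real.zero_rpow hβ.ne', sub_zero]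

theorem intervalIntegrable_sub_rpow {γ : ℝ} (hγ : 0 < γ) (z u v : ℝ) :
    IntervalIntegrable (fun t => (z - t) ^ (γ - 1)) volume u v := by
  simpa using (intervalIntegral.intervalIntegrable_rpow' (a := z - u) (b := z - v)
    (by linarith : (-1 : ℝ) < γ - 1)).comp_sub_left z

theorem integral_rpow_mul_one_sub_rpow {α β : ℝ} (hα : 0 < α) (hβ : 0 < β) :
    ∫ u in (0 : ℝ)..1, u ^ (α - 1) * (1 - u) ^ (β - 1)
      = Real.Gamma α * Real.Gamma β / Real.Gamma (α + β) := by
  have hcomplex := Complex.betaIntegral_eq_Gamma_mul_div α β (by simpa) (by simpa)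
  rw [← Complex.ofReal_add, Complex.Gamma_ofReal, Complex.Gamma_ofReal, Complex.Gamma_ofReal,
    Complex.betaIntegral, ← Complex.ofReal_mul, ← Complex.ofReal_div] at hcomplex
  apply Complex.ofReal_injective
  rw [← intervalIntegral.integral_ofReal, ← hcomplex]
  refine intervalIntegral.integral_congr fun u hu => ?_
  rw [uIcc_of_le zero_le_one] at hu
  push_cast
  rw [Complex.ofReal_cpow hu.1, Complex.ofReal_cpow (sub_nonneg.2 hu.2)]
  push_cast
  rfl

theorem integral_sub_rpow_mul_eq_mul_integral {α : ℝ} (φ : ℝ → ℝ) {s x : ℝ}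
    (hsx : s < x) :
    ∫ t in s..x, (x - t) ^ (α - 1) * φ t
      = (x - s) ^ α * ∫ u in (0 : ℝ)..1, (1 - u) ^ (α - 1) * φ (s + (x - s) * u) := by
  have hxs : 0 < x - s := sub_pos.2 hsx
  have hscale : ∀ u ∈ uIcc (0 : ℝ) 1, (1 - u) ^ (α - 1) * φ (s + (x - s) * u)
      = (x - s) ^ (1 - α) * ((x - (s + (x - s) * u)) ^ (α - 1) * φ (s + (x - s) * u)) := by
    intro u hu
    rw [uIcc_of_le zero_le_one] at hu
    rw [show x - (s + (x - s) * u) = (x - s) * (1 - u) by ring,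
      Real.mul_rpow hxs.le (sub_nonneg.2 hu.2), ← mul_assoc, ← mul_assoc,
      ← Real.rpow_add hxs, show 1 - α + (α - 1) = 0 by ring, Real.rpow_zero, one_mul]
  rw [intervalIntegral.integral_congr hscale, intervalIntegral.integral_const_mul,
    intervalIntegral.integral_comp_add_mul (fun t => (x - t) ^ (α - 1) * φ t) hxs.ne',
    smul_eq_mul, ← mul_assoc, ← mul_assoc, ← Real.rpow_add hxs, ← Real.rpow_neg_one,
    ← Real.rpow_add hxs]
  norm_num

theorem integral_sub_rpow_mul_sub_rpow {α β : ℝ} (hα : 0 < α) (hβ : 0 < β) {s x : ℝ}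
    (hsx : s < x) :
    ∫ t in s..x, (x - t) ^ (α - 1) * (t - s) ^ (β - 1)
      = Real.Gamma α * Real.Gamma β / Real.Gamma (α + β) * (x - s) ^ (α + β - 1) := by
  have hxs : 0 < x - s := sub_pos.2 hsx
  have hscale : ∀ u ∈ uIcc (0 : ℝ) 1, (1 - u) ^ (α - 1) * (s + (x - s) * u - s) ^ (β - 1)
      = (x - s) ^ (β - 1) * (u ^ (β - 1) * (1 - u) ^ (α - 1)) := by
    intro u hu
    rw [uIcc_of_le zero_le_one] at hu
    rw [add_sub_cancel_left, Real.mul_rpow hxs.le hu.1]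
    ring
  rw [integral_sub_rpow_mul_eq_mul_integral _ hsx, intervalIntegral.integral_congr hscale,
    intervalIntegral.integral_const_mul, integral_rpow_mul_one_sub_rpow hβ hα, ← mul_assoc,
    ← Real.rpow_add hxs, add_comm β α, mul_comm (Real.Gamma β)]
  ring_nf

theorem integral_integral_swap_triangle {a x : ℝ} (hax : a ≤ x) {f : ℝ → ℝ → ℝ}
    (hf : Integrable (Function.uncurry fun t s => (Iic t).indicator (f t) s)
      ((volume.restrict (Ioc a x)).prod (volume.restrict (Ioc a x)))) :
    ∫ t in a..x, ∫ s in a..t, f t s = ∫ s in a..x, ∫ t in s..x, f t s := by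
  have hinner : ∀ t ∈ Ioc a x,
      ∫ s in Ioc a x, (Iic t).indicator (f t) s = ∫ s in a..t, f t s := by
    intro t ht
    rw [setIntegral_indicator measurableSet_Iic, Ioc_inter_Iic, min_eq_right ht.2,
      intervalIntegral.integral_of_le ht.1.le]
  have houter : ∀ s ∈ Ioc a x,
      ∫ t in Ioc a x, (Iic t).indicator (f t) s = ∫ t in s..x, f t s := by
    intro s hs
    have hslice : (fun t => (Iic t).indicator (f t) s) = (Ici s).indicator (fun t => f t s) := by
      ext t
      by_cases hst : s ≤ t <;> simp [hst]
    have hinter : Ioc a x ∩ Ici s = Icc s x := by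
      ext t
      simp only [mem_inter_iff, mem_Ioc, mem_Ici, mem_Icc]
      exact ⟨fun h => ⟨h.2, h.1.2⟩, fun h => ⟨⟨hs.1.trans_le h.1, h.2⟩, h.1⟩⟩
    rw [hslice, setIntegral_indicator measurableSet_Ici, hinter, integral_Icc_eq_integral_Ioc,
      intervalIntegral.integral_of_le hs.2]
  calc ∫ t in a..x, ∫ s in a..t, f t s
      = ∫ t in Ioc a x, ∫ s in Ioc a x, (Iic t).indicator (f t) s := by
        rw [intervalIntegral.integral_of_le hax]
        exact (setIntegral_congr_fun measurableSet_Ioc hinner).symm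
    _ = ∫ s in Ioc a x, ∫ t in Ioc a x, (Iic t).indicator (f t) s := integral_integral_swap hf
    _ = ∫ s in a..x, ∫ t in s..x, f t s := by
        rw [intervalIntegral.integral_of_le hax]
        exact setIntegral_congr_fun measurableSet_Ioc houter

theorem integrable_sub_rpow_mul_sub_rpow_triangle {α β : ℝ} (hα : 0 < α) (hβ : 0 < β)
    {a x : ℝ} (hax : a ≤ x) :
    Integrable (Function.uncurry fun t s =>
        (Iic t).indicator (fun s => (x - t) ^ (α - 1) * (t - s) ^ (β - 1)) s)
      ((volume.restrict (Ioc a x)).prod (volume.restrict (Ioc a x))) := by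
  have hmeas : Measurable (Function.uncurry fun t s =>
      (Iic t).indicator (fun s => (x - t) ^ (α - 1) * (t - s) ^ (β - 1)) s) :=
    Measurable.ite (measurableSet_le measurable_snd measurable_fst) (by fun_prop)
      measurable_const
  have hrestrict : ∀ t ∈ Ioc a x, (volume.restrict (Ioc a x)).restrict (Iic t)
      = volume.restrict (Ioc a t) := fun t ht => by
    rw [Measure.restrict_restrict measurableSet_Iic, Iic_inter_Ioc_of_le ht.2]
  have hslice_norm : ∀ t ∈ Ioc a x, ∫ s in Ioc a x,
      ‖(Iic t).indicator (fun s => (x - t) ^ (α - 1) * (t - s) ^ (β - 1)) s‖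
        = (x - t) ^ (α - 1) * ((t - a) ^ β / β) := by
    intro t ht
    simp_rw [norm_indicator_eq_indicator_norm]
    rw [integral_indicator measurableSet_Iic, hrestrict t ht,
      ← intervalIntegral.integral_of_le ht.1.le, ← integral_sub_rpow hβ,
      ← intervalIntegral.integral_const_mul]
    refine intervalIntegral.integral_congr fun s hs => ?_
    rw [uIcc_of_le ht.1.le] at hs
    rw [Real.norm_of_nonneg (by
      have := sub_nonneg.2 ht.2; have := sub_nonneg.2 hs.2; positivity)]
  rw [integrable_prod_iff hmeas.aestronglyMeasurable]
  simp only [Function.uncurry_apply_pair]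
  constructor
  · filter_upwards [ae_restrict_mem measurableSet_Ioc] with t ht
    rw [integrable_indicator_iff measurableSet_Iic, IntegrableOn, hrestrict t ht, ← IntegrableOn,
      ← intervalIntegrable_iff_integrableOn_Ioc_of_le ht.1.le]
    exact (intervalIntegrable_sub_rpow hβ t a t).const_mul _
  · rw [← IntegrableOn, integrableOn_congr_fun hslice_norm measurableSet_Ioc,
      ← intervalIntegrable_iff_integrableOn_Ioc_of_le hax]
    exact (intervalIntegrable_sub_rpow hα x a x).mul_continuousOn
      (((continuous_id.sub continuous_const).rpow_const fun _ => Or.inr hβ.le).div_const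
        _).continuousOn

theorem integrable_sub_rpow_mul_sub_rpow_mul_triangle {α β : ℝ} (hα : 0 < α) (hβ : 0 < β)
    {h : ℝ → ℝ} (hh : Continuous h) {a x : ℝ} (hax : a ≤ x) :
    Integrable (Function.uncurry fun t s =>
        (Iic t).indicator (fun s => (x - t) ^ (α - 1) * (t - s) ^ (β - 1) * h s) s)
      ((volume.restrict (Ioc a x)).prod (volume.restrict (Ioc a x))) := by
  obtain ⟨M, hM⟩ := isCompact_Icc.exists_bound_of_continuousOn (hh.continuousOn (s := Icc a x))
  have hsplit : (Function.uncurry fun t s =>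
      (Iic t).indicator (fun s => (x - t) ^ (α - 1) * (t - s) ^ (β - 1) * h s) s)
      = fun q => Function.uncurry (fun t s =>
          (Iic t).indicator (fun s => (x - t) ^ (α - 1) * (t - s) ^ (β - 1)) s) q * h q.2 := by
    ext ⟨t, s⟩
    exact indicator_mul_left (s := Iic t) (fun s => (x - t) ^ (α - 1) * (t - s) ^ (β - 1)) h
  rw [hsplit]
  refine (integrable_sub_rpow_mul_sub_rpow_triangle hα hβ hax).mul_bdd (c := M)
    (hh.comp continuous_snd).aestronglyMeasurable ?_
  rw [Measure.prod_restrict]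
  filter_upwards [ae_restrict_mem (measurableSet_Ioc.prod measurableSet_Ioc)] with q hq
  exact hM q.2 (Ioc_subset_Icc_self hq.2)

theorem integral_sub_rpow_mul_integral_sub_rpow_mul {α β : ℝ} (hα : 0 < α) (hβ : 0 < β)
    {h : ℝ → ℝ} (hh : Continuous h) {a x : ℝ} (hax : a ≤ x) :
    ∫ t in a..x, (x - t) ^ (α - 1) * ∫ s in a..t, (t - s) ^ (β - 1) * h s
      = Real.Gamma α * Real.Gamma β / Real.Gamma (α + β) *
        ∫ s in a..x, (x - s) ^ (α + β - 1) * h s := by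
  -- `Ioo`, not `Ioc`: at `s = x` the left side vanishes, but the right side contains
  -- `0 ^ (α + β - 1)`, which is `1` when `α + β = 1`.
  have hinner : ∀ s ∈ Ioo a x, ∫ t in s..x, (x - t) ^ (α - 1) * (t - s) ^ (β - 1) * h s
      = Real.Gamma α * Real.Gamma β / Real.Gamma (α + β) * (x - s) ^ (α + β - 1) * h s := by
    intro s hs
    rw [intervalIntegral.integral_mul_const, integral_sub_rpow_mul_sub_rpow hα hβ hs.2]
  simp_rw [← intervalIntegral.integral_const_mul, ← mul_assoc]
  rw [integral_integral_swap_triangle hax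
      (integrable_sub_rpow_mul_sub_rpow_mul_triangle hα hβ hh hax),
    intervalIntegral.integral_of_le hax, intervalIntegral.integral_of_le hax,
    integral_Ioc_eq_integral_Ioo, integral_Ioc_eq_integral_Ioo]
  exact setIntegral_congr_fun measurableSet_Ioo hinner

theorem rlInt_one (a : ℝ) (h : ℝ → ℝ) (x : ℝ) : rlInt a 1 h x = ∫ t in a..x, h t := by
  simp [rlInt]

theorem rlInt_congr {a α x : ℝ} {f g : ℝ → ℝ} (hax : a ≤ x) (hfg : EqOn f g (Icc a x)) :
    rlInt a α f x = rlInt a α g x := by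
  rw [rlInt, rlInt, intervalIntegral.integral_congr fun t ht => ?_]
  rw [uIcc_of_le hax] at ht
  simp only [hfg ht]

theorem rlInt_rlInt_of_continuous {α β : ℝ} (hα : 0 < α) (hβ : 0 < β) {h : ℝ → ℝ}
    (hh : Continuous h) {a x : ℝ} (hax : a ≤ x) :
    rlInt a α (rlInt a β h) x = rlInt a (α + β) h x := by
  have hΓα := (Real.Gamma_pos_of_pos hα).ne'
  have hΓβ := (Real.Gamma_pos_of_pos hβ).ne'
  simp only [rlInt]
  simp_rw [mul_left_comm _ (1 / Real.Gamma β)]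
  rw [intervalIntegral.integral_const_mul,
    integral_sub_rpow_mul_integral_sub_rpow_mul hα hβ hh hax]
  field_simp

theorem rlInt_rlInt {α β : ℝ} (hα : 0 < α) (hβ : 0 < β) {a x : ℝ} {h : ℝ → ℝ}
    (hh : ContinuousOn h (Icc a x)) (hax : a ≤ x) :
    rlInt a α (rlInt a β h) x = rlInt a (α + β) h x := by
  set h' := IccExtend hax ((Icc a x).domRestrict h)
  have heq : EqOn h h' (Icc a x) := fun y hy =>
    (IccExtend_of_mem hax ((Icc a x).domRestrict h) hy).symm
  calc rlInt a α (rlInt a β h) x = rlInt a α (rlInt a β h') x :=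
        rlInt_congr hax fun t ht => rlInt_congr ht.1 (heq.mono (Icc_subset_Icc_right ht.2))
    _ = rlInt a (α + β) h' x := rlInt_rlInt_of_continuous hα hβ hh.domRestrict.Icc_extend' hax
    _ = rlInt a (α + β) h x := (rlInt_congr hax heq).symm

theorem affine_mem_Icc {a b x u : ℝ} (hx : x ∈ Icc a b) (hu : u ∈ Icc (0 : ℝ) 1) :
    a + (x - a) * u ∈ Icc a b := by
  have := mul_le_mul_of_nonneg_left hu.2 (sub_nonneg.2 hx.1)
  exact ⟨le_add_of_nonneg_right (mul_nonneg (sub_nonneg.2 hx.1) hu.1), by linarith [hx.2]⟩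

theorem continuousOn_integral_one_sub_rpow_mul_comp {α : ℝ} (hα : 0 < α) {a b : ℝ}
    {h : ℝ → ℝ} (hh : ContinuousOn h (Icc a b)) :
    ContinuousOn (fun x => ∫ u in (0 : ℝ)..1, (1 - u) ^ (α - 1) * h (a + (x - a) * u))
      (Icc a b) := by
  obtain ⟨M, hM⟩ := isCompact_Icc.exists_bound_of_continuousOn hh
  intro x₀ hx₀
  refine intervalIntegral.continuousWithinAt_of_dominated_interval
    (bound := fun u => (1 - u) ^ (α - 1) * M) ?_ ?_ ?_ ?_
  · filter_upwards [self_mem_nhdsWithin] with x hx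
    refine (by fun_prop : Measurable fun u : ℝ => (1 - u) ^ (α - 1)).aestronglyMeasurable.mul ?_
    refine ContinuousOn.aestronglyMeasurable (hh.comp (by fun_prop) fun u hu => ?_)
      measurableSet_uIoc
    rw [uIoc_of_le zero_le_one] at hu
    exact affine_mem_Icc hx (Ioc_subset_Icc_self hu)
  · filter_upwards [self_mem_nhdsWithin] with x hx
    refine Filter.Eventually.of_forall fun u hu => ?_
    rw [uIoc_of_le zero_le_one] at hu
    have h1u : 0 ≤ 1 - u := sub_nonneg.2 hu.2
    rw [norm_mul, Real.norm_of_nonneg (Real.rpow_nonneg h1u _)]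
    exact mul_le_mul_of_nonneg_left (hM _ (affine_mem_Icc hx (Ioc_subset_Icc_self hu)))
      (Real.rpow_nonneg h1u _)
  · exact (intervalIntegrable_sub_rpow hα 1 0 1).mul_const M
  · refine Filter.Eventually.of_forall fun u hu => ?_
    rw [uIoc_of_le zero_le_one] at hu
    exact continuousWithinAt_const.mul
      ((hh _ (affine_mem_Icc hx₀ (Ioc_subset_Icc_self hu))).comp
        (f := fun x => a + (x - a) * u) (by fun_prop) fun x hx =>
          affine_mem_Icc hx (Ioc_subset_Icc_self hu))

theorem continuousOn_rlInt {α : ℝ} (hα : 0 < α) {a b : ℝ} {h : ℝ → ℝ}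
    (hh : ContinuousOn h (Icc a b)) : ContinuousOn (rlInt a α h) (Icc a b) := by
  refine ContinuousOn.congr (f := fun x => 1 / Real.Gamma α * ((x - a) ^ α *
    ∫ u in (0 : ℝ)..1, (1 - u) ^ (α - 1) * h (a + (x - a) * u))) ?_ fun x hx => ?_
  · exact continuousOn_const.mul ((((continuous_id.sub continuous_const).rpow_const
      fun _ => Or.inr hα.le).continuousOn).mul
        (continuousOn_integral_one_sub_rpow_mul_comp hα hh))
  · rcases hx.1.eq_or_lt with rfl | hax
    · simp [rlInt, Real.zero_rpow hα.ne']
    · rw [rlInt, integral_sub_rpow_mul_eq_mul_integral h hax]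

theorem eqOn_of_forall_integral_eq {a b : ℝ} (hab : a < b) {f g : ℝ → ℝ}
    (hf : ContinuousOn f (Icc a b)) (hg : ContinuousOn g (Icc a b))
    (hfg : ∀ x ∈ Icc a b, ∫ t in a..x, f t = ∫ t in a..x, g t) : EqOn f g (Icc a b) := by
  have hderiv : ∀ {φ : ℝ → ℝ}, ContinuousOn φ (Icc a b) → ∀ x ∈ Ioo a b,
      HasDerivAt (fun y => ∫ t in a..y, φ t) (φ x) x := fun {φ} hφ x hx =>
    intervalIntegral.integral_hasDerivAt_right
      ((hφ.mono (Icc_subset_Icc_right hx.2.le)).intervalIntegrable_of_Icc hx.1.le)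
      ((hφ.mono Ioo_subset_Icc_self).stronglyMeasurableAtFilter isOpen_Ioo x hx)
      (hφ.continuousAt (Icc_mem_nhds hx.1 hx.2))
  have hinterior : EqOn f g (Ioo a b) := fun x hx =>
    (hderiv hf x hx).unique <| (hderiv hg x hx).congr_of_eventuallyEq <|
      Filter.eventually_of_mem (Icc_mem_nhds hx.1 hx.2) fun y hy => hfg y hy
  exact hinterior.of_subset_closure hf hg Ioo_subset_Icc_self (closure_Ioo hab.ne).ge

theorem abel_equation_solvability_general (a b n : ℝ) (hab : a < b)
    (hn1 : 0 < n) (hn2 : n < 1)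
    (F : ℝ → ℝ) (hF : ContinuousOn F (Icc a b)) :
    (∃ Φ : ℝ → ℝ, ContinuousOn Φ (Icc a b) ∧ Φ a = 0 ∧
      ∀ x ∈ Icc a b, rlInt a n Φ x = F x) ↔
    (∃ g : ℝ → ℝ, ContinuousOn g (Icc a b) ∧ g a = 0 ∧
      ∀ x ∈ Icc a b, rlInt a (1 - n) F x = ∫ t in a..x, g t) := by
  have h1n : 0 < 1 - n := sub_pos.2 hn2
  constructor
  · rintro ⟨Φ, hΦ, hΦa, hΦF⟩
    refine ⟨Φ, hΦ, hΦa, fun x hx => ?_⟩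
    have hΦx : ContinuousOn Φ (Icc a x) := hΦ.mono (Icc_subset_Icc_right hx.2)
    calc rlInt a (1 - n) F x = rlInt a (1 - n) (rlInt a n Φ) x :=
          rlInt_congr hx.1 fun t ht => (hΦF t ⟨ht.1, ht.2.trans hx.2⟩).symm
      _ = ∫ t in a..x, Φ t := by rw [rlInt_rlInt h1n hn1 hΦx hx.1, sub_add_cancel, rlInt_one]
  · rintro ⟨g, hg, hga, hFg⟩
    refine ⟨g, hg, hga, eqOn_of_forall_integral_eq hab (continuousOn_rlInt hn1 hg) hF ?_⟩
    intro x hx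
    have hgx : ContinuousOn g (Icc a x) := hg.mono (Icc_subset_Icc_right hx.2)
    have hFx : ContinuousOn F (Icc a x) := hF.mono (Icc_subset_Icc_right hx.2)
    calc ∫ t in a..x, rlInt a n g t
        = rlInt a (1 + n) g x := by rw [← rlInt_one, rlInt_rlInt one_pos hn1 hgx hx.1]
      _ = rlInt a n (rlInt a 1 g) x := by rw [add_comm, rlInt_rlInt hn1 one_pos hgx hx.1]
      _ = rlInt a n (rlInt a (1 - n) F) x :=
          rlInt_congr hx.1 fun t ht => by rw [rlInt_one, hFg t ⟨ht.1, ht.2.trans hx.2⟩]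
      _ = ∫ t in a..x, F t := by rw [rlInt_rlInt hn1 h1n hFx hx.1, add_sub_cancel, rlInt_one]

theorem abel_equation_solvability (a b n : ℝ) (hab : a < b)
    (hn1 : 0 < n) (hn2 : n < 1)
    (F : ℝ → ℝ) (hF : ContinuousOn F (Icc a b)) (hFa : F a = 0) :
    (∃ Φ : ℝ → ℝ, ContinuousOn Φ (Icc a b) ∧ Φ a = 0 ∧
      ∀ x ∈ Icc a b, rlInt a n Φ x = F x) ↔
    (∃ g : ℝ → ℝ, ContinuousOn g (Icc a b) ∧ g a = 0 ∧
      ∀ x ∈ Icc a b, rlInt a (1 - n) F x = ∫ t in a..x, g t) :=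
  abel_equation_solvability_general a b n hab hn1 hn2 F hF
end

section
/- Let $a < b$ be real numbers and $n > 0$. Let $f \in L^1(\mathbb{R})$ be a real-valued integrable function with support contained in $[a,b]$, let $F(x) := \int_{-\infty}^x f(t)\,dt$, and let $\phi_n(u) := u^{n-1}$ for $0 < u \le b-a$ and $\phi_n(u) := 0$ otherwise. Then for every complex-valued Schwartz function $\varphi$ on $\mathbb{R}$, $\int_{\mathbb{R}} (\phi_n * f)(x)\, \widehat{\varphi}(x)\,dx = \int_{\mathbb{R}} (\phi_n * F)(x)\, \widehat{\eta\varphi}(x)\,dx$, where $\widehat{\varphi}(x) := \int_{\mathbb{R}} e^{-2\pi i x t} \varphi(t)\,dt$ is the Fourier transform and $(\eta\varphi)(s) := 2\pi i s\, \varphi(s)$; all the integrals converge absolutely. (This states that the Fourier transform of $\mathcal{J}_a^n f$, as a tempered distribution, equals $2\pi i s$ times the Fourier transform of $\mathcal{J}_a^n F$; it is the paper's Proposition on the Fourier transform of the Riemann–Liouville fractional integral, stated for integrable $f$, a subspace of $D_{HK}$.) -/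
open MeasureTheory Set

/-- The kernel `φ_n(u) = u^{n-1}` for `0 < u ≤ b - a`, and `0` otherwise. -/
noncomputable def rlKernel (a b n : ℝ) (u : ℝ) : ℝ :=
  if 0 < u ∧ u ≤ b - a then u ^ (n - 1) else 0

/-- Convolution of two real functions on `ℝ` (with respect to Lebesgue measure). -/
noncomputable def convR (g f : ℝ → ℝ) (x : ℝ) : ℝ :=
  ∫ y, g (x - y) * f y

/-! Write `K = φ_n`, `h = 𝓕 φ` and `G = 𝓕 (η φ)`. Differentiating under the Fourier
integral gives `G = -h'`, and `h` vanishes at infinity, so `∫_{(r, ∞)} G = h r`. By Fubini,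
pairing a convolution `K * g` with `ψ` equals pairing `g` with the transposed convolution
`Kᵀψ (y) = ∫ K (x - y) ψ x dx` (`convRAdjoint K ψ`); this turns the left side into `∫ f · Kᵀh`
and the right side into `∫ F · KᵀG`. Since `F` is the primitive of `f`, one more Fubini gives
`∫ F · KᵀG = ∫ f(s) ∫_{(s, ∞)} KᵀG`, and translation invariance of Lebesgue measure makes `Kᵀ`
commute with tail integrals: `∫_{(s, ∞)} KᵀG = Kᵀh s`. -/

open Filter Topology
open scoped FourierTransform

lemma rlKernel_eq_indicator (a b n : ℝ) :
    rlKernel a b n = (Ioc 0 (b - a)).indicator (fun u => u ^ (n - 1)) := by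
  funext u
  simp [rlKernel, indicator_apply, mem_Ioc]

lemma integrable_rlKernel (a b : ℝ) {n : ℝ} (hn : 0 < n) : Integrable (rlKernel a b n) := by
  rw [rlKernel_eq_indicator, integrable_indicator_iff measurableSet_Ioc]
  exact (intervalIntegral.intervalIntegrable_rpow' (by linarith : (-1 : ℝ) < n - 1)).1

section fourier

variable (φ : SchwartzMap ℝ ℂ)

lemma hasDerivAt_fourier_schwartz (x : ℝ) :
    HasDerivAt (𝓕 (φ : ℝ → ℂ))
      (-𝓕 (fun s => ((2 * Real.pi * s : ℝ) : ℂ) * Complex.I * φ s) x) x := by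
  have hφ : Integrable (fun t : ℝ => t • φ t) :=
    (φ.integrable_pow_mul volume 1).mono' (continuous_id.smul φ.continuous).aestronglyMeasurable
      (ae_of_all _ fun t => by simp)
  have hη : 𝓕 (fun t : ℝ => (-2 * Real.pi * Complex.I * t) • φ t) x =
      -𝓕 (fun s => ((2 * Real.pi * s : ℝ) : ℂ) * Complex.I * φ s) x := by
    rw [Real.fourier_real_eq, Real.fourier_real_eq, ← integral_neg]
    congr 1
    funext v
    simp only [Circle.smul_def, smul_eq_mul]
    push_cast
    ring
  rw [← hη]
  exact Real.hasDerivAt_fourier φ.integrable hφ x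

lemma fourier_two_pi_I_mul_eq_neg_deriv :
    𝓕 (fun s => ((2 * Real.pi * s : ℝ) : ℂ) * Complex.I * φ s) =
      fun x => -SchwartzMap.derivCLM ℝ ℂ (𝓕 φ) x := by
  funext x
  rw [SchwartzMap.derivCLM_apply, SchwartzMap.fourier_coe,
    (hasDerivAt_fourier_schwartz φ x).deriv, neg_neg]

lemma integrable_fourier_two_pi_I_mul :
    Integrable (𝓕 (fun s => ((2 * Real.pi * s : ℝ) : ℂ) * Complex.I * φ s)) := by
  rw [fourier_two_pi_I_mul_eq_neg_deriv]
  exact (SchwartzMap.derivCLM ℝ ℂ (𝓕 φ)).integrable.neg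

lemma integral_Ioi_fourier_two_pi_I_mul (r : ℝ) :
    ∫ x in Ioi r, 𝓕 (fun s => ((2 * Real.pi * s : ℝ) : ℂ) * Complex.I * φ s) x =
      𝓕 (φ : ℝ → ℂ) r := by
  have hlim : Tendsto (𝓕 (φ : ℝ → ℂ)) atTop (𝓝 0) :=
    (zero_at_infty (𝓕 φ)).mono_left atTop_le_cocompact
  have h := integral_Ioi_of_hasDerivAt_of_tendsto' (a := r)
    (fun x _ => hasDerivAt_fourier_schwartz φ x)
    (integrable_fourier_two_pi_I_mul φ).neg.integrableOn hlim
  rwa [integral_neg, zero_sub, neg_inj] at h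

end fourier

section adjoint

noncomputable def convRAdjoint (K : ℝ → ℝ) (ψ : ℝ → ℂ) (y : ℝ) : ℂ :=
  ∫ x, (K (x - y) : ℂ) * ψ x

variable {K g : ℝ → ℝ} {ψ : ℝ → ℂ}

lemma convR_mul_eq_integral (K g : ℝ → ℝ) (ψ : ℝ → ℂ) (x : ℝ) :
    (convR K g x : ℂ) * ψ x = ∫ y, ((K (x - y) * g y : ℝ) : ℂ) * ψ x := by
  rw [convR, integral_mul_const, integral_complex_ofReal]

lemma integrable_convR_mul
    (h : Integrable (fun p : ℝ × ℝ => ((K (p.1 - p.2) * g p.2 : ℝ) : ℂ) * ψ p.1)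
      (volume.prod volume)) :
    Integrable (fun x => (convR K g x : ℂ) * ψ x) :=
  h.integral_prod_left.congr (ae_of_all _ fun x => (convR_mul_eq_integral K g ψ x).symm)

lemma integral_convR_mul
    (h : Integrable (fun p : ℝ × ℝ => ((K (p.1 - p.2) * g p.2 : ℝ) : ℂ) * ψ p.1)
      (volume.prod volume)) :
    ∫ x, (convR K g x : ℂ) * ψ x = ∫ y, (g y : ℂ) * convRAdjoint K ψ y := by
  simp_rw [convR_mul_eq_integral]
  rw [integral_integral_swap h]
  congr 1
  funext y
  rw [convRAdjoint, ← integral_const_mul]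
  congr 1
  funext x
  push_cast
  ring

lemma integrable_convR_integrand_of_integrable_of_bdd (hK : Integrable K) (hg : Integrable g)
    (hψ : AEStronglyMeasurable ψ) {C : ℝ} (hC : ∀ x, ‖ψ x‖ ≤ C) :
    Integrable (fun p : ℝ × ℝ => ((K (p.1 - p.2) * g p.2 : ℝ) : ℂ) * ψ p.1)
      (volume.prod volume) := by
  have h := (hg.convolution_integrand (ContinuousLinearMap.mul ℝ ℝ) hK).ofReal (𝕜 := ℂ)
  refine (h.bdd_mul hψ.comp_fst (ae_of_all _ fun p => hC p.1)).congr (ae_of_all _ fun p => ?_)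
  simp only [ContinuousLinearMap.mul_apply', RCLike.ofReal_eq_complex_ofReal]
  push_cast
  ring

lemma integrable_convR_integrand_of_bdd_of_integrable (hK : Integrable K)
    (hg : AEStronglyMeasurable g) {C : ℝ} (hC : ∀ y, |g y| ≤ C) (hψ : Integrable ψ) :
    Integrable (fun p : ℝ × ℝ => ((K (p.1 - p.2) * g p.2 : ℝ) : ℂ) * ψ p.1)
      (volume.prod volume) := by
  have h := (hψ.convolution_integrand (ContinuousLinearMap.mul ℂ ℂ)
    (hK.ofReal (𝕜 := ℂ)).comp_neg).swap
  have hg' : AEStronglyMeasurable (fun p : ℝ × ℝ => (g p.2 : ℂ)) (volume.prod volume) :=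
    (Complex.continuous_ofReal.comp_aestronglyMeasurable hg).comp_snd
  refine (h.bdd_mul hg' (c := C) (ae_of_all _ fun p => by simpa using hC p.2)).congr
    (ae_of_all _ fun p => ?_)
  simp only [ContinuousLinearMap.mul_apply', Function.comp_apply, Prod.fst_swap, Prod.snd_swap,
    neg_sub, RCLike.ofReal_eq_complex_ofReal]
  push_cast
  ring

lemma convRAdjoint_eq_integral_add (K : ℝ → ℝ) (ψ : ℝ → ℂ) (y : ℝ) :
    convRAdjoint K ψ y = ∫ v, (K v : ℂ) * ψ (v + y) := by
  rw [convRAdjoint, ← integral_add_right_eq_self _ y]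
  simp

lemma integrable_kernel_mul_comp_add (hK : Integrable K) (hψ : Integrable ψ) :
    Integrable (fun p : ℝ × ℝ => (K p.2 : ℂ) * ψ (p.2 + p.1)) (volume.prod volume) := by
  have h : Integrable (fun p : ℝ × ℝ => ψ p.1 * (K p.2 : ℂ)) (volume.prod volume) :=
    hψ.mul_prod hK.ofReal
  have hmeas : AEStronglyMeasurable (fun p : ℝ × ℝ => ψ p.1 * (K p.2 : ℂ)) (volume.prod volume) :=
    hψ.aestronglyMeasurable.comp_fst.mul (hK.ofReal (𝕜 := ℂ)).aestronglyMeasurable.comp_snd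
  rw [← (measurePreserving_add_prod volume volume).integrable_comp hmeas] at h
  exact h.congr (ae_of_all _ fun p => by simp [add_comm, mul_comm])

lemma integrable_convRAdjoint (hK : Integrable K) (hψ : Integrable ψ) :
    Integrable (convRAdjoint K ψ) :=
  (integrable_kernel_mul_comp_add hK hψ).integral_prod_left.congr
    (ae_of_all _ fun y => (convRAdjoint_eq_integral_add K ψ y).symm)

lemma integral_Ioi_comp_add_left (ψ : ℝ → ℂ) (v s : ℝ) :
    ∫ y in Ioi s, ψ (v + y) = ∫ x in Ioi (v + s), ψ x := by
  have h := (measurePreserving_add_left volume v).setIntegral_preimage_emb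
    (measurableEmbedding_addLeft v) ψ (Ioi (v + s))
  rwa [preimage_const_add_Ioi, add_sub_cancel_left] at h

lemma integral_Ioi_convRAdjoint (hK : Integrable K) (hψ : Integrable ψ) {Ψ : ℝ → ℂ}
    (hΨ : ∀ r, ∫ x in Ioi r, ψ x = Ψ r) (s : ℝ) :
    ∫ y in Ioi s, convRAdjoint K ψ y = convRAdjoint K Ψ s := by
  have hint : Integrable (fun p : ℝ × ℝ => (K p.2 : ℂ) * ψ (p.2 + p.1))
      ((volume.restrict (Ioi s)).prod volume) := by
    have hres : (volume.restrict (Ioi s)).prod (volume : Measure ℝ) =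
        (volume.prod volume).restrict (Ioi s ×ˢ univ) := by
      rw [← Measure.prod_restrict, Measure.restrict_univ]
    rw [hres]
    exact (integrable_kernel_mul_comp_add hK hψ).restrict
  calc ∫ y in Ioi s, convRAdjoint K ψ y = ∫ y in Ioi s, ∫ v, (K v : ℂ) * ψ (v + y) := by
        simp_rw [convRAdjoint_eq_integral_add]
    _ = ∫ v, ∫ y in Ioi s, (K v : ℂ) * ψ (v + y) := integral_integral_swap hint
    _ = ∫ v, (K v : ℂ) * Ψ (v + s) := by
        simp_rw [integral_const_mul, integral_Ioi_comp_add_left, hΨ]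
    _ = convRAdjoint K Ψ s := (convRAdjoint_eq_integral_add K Ψ s).symm

end adjoint

section primitive

variable {f : ℝ → ℝ}

lemma abs_integral_Iic_le (hf : Integrable f) (x : ℝ) : |∫ t in Iic x, f t| ≤ ∫ t, |f t| := by
  rw [← Real.norm_eq_abs]
  exact (norm_integral_le_integral_norm _).trans
    (setIntegral_le_integral hf.norm (ae_of_all _ fun t => norm_nonneg _))

lemma continuous_integral_Iic (hf : Integrable f) : Continuous fun x => ∫ t in Iic x, f t := by
  have h : (fun x => ∫ t in Iic x, f t) =
      fun x => (∫ t in Iic 0, f t) + ∫ t in (0 : ℝ)..x, f t := by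
    funext x
    rw [← intervalIntegral.integral_Iic_sub_Iic hf.integrableOn hf.integrableOn]
    ring
  rw [h]
  exact continuous_const.add
    (intervalIntegral.continuous_primitive (fun _ _ => hf.intervalIntegrable) 0)

lemma integral_integral_Iic_mul {Θ : ℝ → ℂ} (hf : Integrable f) (hΘ : Integrable Θ) :
    ∫ y, ((∫ t in Iic y, f t : ℝ) : ℂ) * Θ y = ∫ s, (f s : ℂ) * ∫ y in Ioi s, Θ y := by
  set S : Set (ℝ × ℝ) := {q | q.2 ≤ q.1}
  have hS : MeasurableSet S := (isClosed_le continuous_snd continuous_fst).measurableSet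
  have hint : Integrable (S.indicator fun q => (f q.2 : ℂ) * Θ q.1) (volume.prod volume) :=
    ((hΘ.mul_prod hf.ofReal).congr (ae_of_all _ fun q => mul_comm _ _)).indicator hS
  have hy (y : ℝ) : ((∫ t in Iic y, f t : ℝ) : ℂ) * Θ y =
      ∫ s, S.indicator (fun q => (f q.2 : ℂ) * Θ q.1) (y, s) := by
    rw [← integral_complex_ofReal, ← integral_mul_const, ← integral_indicator measurableSet_Iic]
    -- `s ∈ Iic y` and `(y, s) ∈ S` unfold to the same condition `s ≤ y`
    rfl
  have hs (s : ℝ) : ∫ y, S.indicator (fun q => (f q.2 : ℂ) * Θ q.1) (y, s) =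
      (f s : ℂ) * ∫ y in Ioi s, Θ y := by
    rw [← integral_Ici_eq_integral_Ioi, ← integral_const_mul,
      ← integral_indicator measurableSet_Ici]
    rfl
  rw [integral_congr_ae (ae_of_all _ hy), integral_integral_swap (by exact hint)]
  exact integral_congr_ae (ae_of_all _ hs)

end primitive

theorem fourier_transform_of_rl_integral_general (a b n : ℝ) (hn : 0 < n)
    (f : ℝ → ℝ) (hf : Integrable f)
    (F : ℝ → ℝ) (hF : ∀ x, F x = ∫ t in Iic x, f t) :
    ∀ φ : SchwartzMap ℝ ℂ,
      Integrable (fun x =>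
        (convR (rlKernel a b n) f x : ℂ) * FourierTransform.fourier (fun t => φ t) x) ∧
      Integrable (fun x =>
        (convR (rlKernel a b n) F x : ℂ) *
          FourierTransform.fourier (fun s => ((2 * Real.pi * s : ℝ) : ℂ) * Complex.I * φ s) x) ∧
      ∫ x, (convR (rlKernel a b n) f x : ℂ) * FourierTransform.fourier (fun t => φ t) x =
        ∫ x, (convR (rlKernel a b n) F x : ℂ) *
          FourierTransform.fourier (fun s => ((2 * Real.pi * s : ℝ) : ℂ) * Complex.I * φ s) x := by
  intro φ
  set K := rlKernel a b n
  set ψ := 𝓕 (fun s => ((2 * Real.pi * s : ℝ) : ℂ) * Complex.I * φ s)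
  obtain rfl : F = fun x => ∫ t in Iic x, f t := funext hF
  have hK : Integrable K := integrable_rlKernel a b hn
  have hψ : Integrable ψ := integrable_fourier_two_pi_I_mul φ
  have hint_f := integrable_convR_integrand_of_integrable_of_bdd hK hf
    (𝓕 φ).continuous.aestronglyMeasurable ((𝓕 φ).norm_le_seminorm ℝ)
  have hint_F := integrable_convR_integrand_of_bdd_of_integrable hK
    (continuous_integral_Iic hf).aestronglyMeasurable (abs_integral_Iic_le hf) hψ
  refine ⟨integrable_convR_mul hint_f, integrable_convR_mul hint_F, ?_⟩
  calc _ = ∫ y, (f y : ℂ) * convRAdjoint K (𝓕 (φ : ℝ → ℂ)) y := integral_convR_mul hint_f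
    _ = ∫ s, (f s : ℂ) * ∫ y in Ioi s, convRAdjoint K ψ y := by
        simp_rw [integral_Ioi_convRAdjoint hK hψ (integral_Ioi_fourier_two_pi_I_mul φ)]
    _ = _ := (integral_integral_Iic_mul hf (integrable_convRAdjoint hK hψ)).symm
    _ = _ := (integral_convR_mul hint_F).symm

theorem fourier_transform_of_rl_integral (a b n : ℝ) (hab : a < b) (hn : 0 < n)
    (f : ℝ → ℝ) (hf : Integrable f) (hsupp : Function.support f ⊆ Icc a b)
    (F : ℝ → ℝ) (hF : ∀ x, F x = ∫ t in Iic x, f t) :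
    ∀ φ : SchwartzMap ℝ ℂ,
      Integrable (fun x =>
        (convR (rlKernel a b n) f x : ℂ) * FourierTransform.fourier (fun t => φ t) x) ∧
      Integrable (fun x =>
        (convR (rlKernel a b n) F x : ℂ) *
          FourierTransform.fourier (fun s => ((2 * Real.pi * s : ℝ) : ℂ) * Complex.I * φ s) x) ∧
      ∫ x, (convR (rlKernel a b n) f x : ℂ) * FourierTransform.fourier (fun t => φ t) x =
        ∫ x, (convR (rlKernel a b n) F x : ℂ) *
          FourierTransform.fourier (fun s => ((2 * Real.pi * s : ℝ) : ℂ) * Complex.I * φ s) x :=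
  fourier_transform_of_rl_integral_general a b n hn f hf F hF
end
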